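/- arXiv:1512.03786 — 6 statements merged into one kernel-verified Lean document; each statement's English description precedes it below -/
import Mathlib

section
/- Let (a₁,b₁) and (a₂,b₂) be pairs in ℂ × (ℂ \ {0}) such that (a₂,b₂) ≠ (a₁,b₁) and (a₂,b₂) ≠ (−a₁,−b₁). Then the matrices A₂(a₁,b₁) and A₂(a₂,b₂) do not commute: A₂(a₁,b₁)·A₂(a₂,b₂) ≠ A₂(a₂,b₂)·A₂(a₁,b₁). -/
/-! Every `A₂(a,b)` is traceless with determinant `-1`. Two commuting traceless `2 × 2` matrices are
proportional (their commutator is, up to a factor `2`, the cross product of their entry vectors),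
so `A₂(a₂,b₂) = t • A₂(a₁,b₁)`; comparing determinants gives `t = ±1`, and `-A₂(a,b) = A₂(-a,-b)`. -/

/-- The matrix `A₂(a,b) = [[a, b], [(1−a²)/b, −a]]`. -/
noncomputable def A2 (a b : ℂ) : Matrix (Fin 2) (Fin 2) ℂ :=
  !![a, b; (1 - a ^ 2) / b, -a]

theorem Matrix.eq_smul_of_commute_traceless {K : Type*} [Field K] (h2 : (2 : K) ≠ 0)
    {a b c a' b' c' : K} (hb : b ≠ 0) (h : Commute !![a, b; c, -a] !![a', b'; c', -a']) :
    !![a', b'; c', -a'] = (b' / b) • !![a, b; c, -a] := by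
  have h01 := congrFun (congrFun h.eq 0) 1
  have h00 := congrFun (congrFun h.eq 0) 0
  simp only [Matrix.mul_apply, Fin.sum_univ_two, Matrix.of_apply, Matrix.cons_val',
    Matrix.cons_val_zero, Matrix.cons_val_one, Matrix.empty_val', Matrix.cons_val_fin_one] at h01 h00
  have ha' : a' = b' / b * a := by
    field_simp
    exact mul_left_cancel₀ h2 (by linear_combination -h01)
  have hc' : c' = b' / b * c := by
    field_simp
    linear_combination h00
  ext i j
  fin_cases i <;> fin_cases j <;> simp [ha', hc', hb]

theorem A2_det {a b : ℂ} (hb : b ≠ 0) : (A2 a b).det = -1 := by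
  simp only [A2, Matrix.det_fin_two_of]
  field_simp
  ring

theorem neg_A2 (a b : ℂ) : -A2 a b = A2 (-a) (-b) := by
  simp only [A2, Matrix.neg_of, Matrix.neg_cons, Matrix.neg_empty, neg_neg, neg_sq, div_neg]

theorem A2_inj {a b a' b' : ℂ} : A2 a b = A2 a' b' ↔ (a, b) = (a', b') := by
  refine ⟨fun h => ?_, by rintro ⟨⟩; rfl⟩
  have h00 := congrFun (congrFun h 0) 0
  have h01 := congrFun (congrFun h 0) 1
  simp only [A2, Matrix.of_apply, Matrix.cons_val', Matrix.cons_val_zero, Matrix.cons_val_one,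
    Matrix.empty_val', Matrix.cons_val_fin_one] at h00 h01
  rw [h00, h01]

theorem A2_not_commute (a₁ b₁ a₂ b₂ : ℂ) (hb₁ : b₁ ≠ 0) (hb₂ : b₂ ≠ 0)
    (h₁ : (a₂, b₂) ≠ (a₁, b₁)) (h₂ : (a₂, b₂) ≠ (-a₁, -b₁)) :
    A2 a₁ b₁ * A2 a₂ b₂ ≠ A2 a₂ b₂ * A2 a₁ b₁ := by
  intro h
  obtain ⟨t, hprop⟩ : ∃ t : ℂ, A2 a₂ b₂ = t • A2 a₁ b₁ :=
    ⟨_, Matrix.eq_smul_of_commute_traceless two_ne_zero hb₁ h⟩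
  have ht : t ^ 2 = 1 := by
    have hdet := congrArg Matrix.det hprop
    rw [Matrix.det_smul, A2_det hb₁, A2_det hb₂, Fintype.card_fin] at hdet
    linear_combination hdet
  rcases sq_eq_one_iff.mp ht with rfl | rfl
  · exact h₁ (A2_inj.mp (by rw [hprop, one_smul]))
  · exact h₂ (A2_inj.mp (by rw [hprop, neg_one_smul, neg_A2]))
end

section
/- Let m ≥ 1 be a natural number, let a, b ∈ ℂ with a ≠ 1 and b ≠ 0, and let c : Fin m → ℂ. Let Q be the m×2 complex matrix whose i-th row is (c(i), −b·c(i)/(1−a)), and let A be the (m+2)×(m+2) block matrix A = [[I_m, Q], [O, A₂(a,b)]], where I_m is the m×m identity matrix and O is the 2×m zero matrix. Then A² = I_{m+2}, the identity matrix of size m+2. -/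
/-!
`A₂(a,b)` has trace `0` and determinant `-1`, so it is an involution, and the row vector
`(1, -b/(1-a))` is a left eigenvector of it for the eigenvalue `-1`. The upper right block is
`c` times this row vector, so it is annihilated by `1 + A₂(a,b)` on the right, which is exactly
what makes the square of the block matrix the identity.
-/

open Matrix

theorem Matrix.fromBlocks_one_zero_sq_eq_one {m n α : Type*} [Fintype m] [Fintype n]
    [DecidableEq m] [DecidableEq n] [Ring α] (Q : Matrix m n α) (A : Matrix n n α)
    (hA : A * A = 1) (hQ : Q * A = -Q) :
    fromBlocks (1 : Matrix m m α) Q 0 A ^ 2 = 1 := by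
  rw [sq, fromBlocks_multiply, hA, hQ]
  simp

theorem A2_mul_self (a : ℂ) {b : ℂ} (hb : b ≠ 0) : A2 a b * A2 a b = 1 := by
  ext i j
  fin_cases i <;> fin_cases j <;> simp [A2, mul_apply, Fin.sum_univ_two] <;> field_simp <;> ring

theorem vecMul_A2_eq_neg {a b : ℂ} (ha : a ≠ 1) (hb : b ≠ 0) :
    ![1, -b / (1 - a)] ᵥ* A2 a b = -![1, -b / (1 - a)] := by
  have ha' : 1 - a ≠ 0 := sub_ne_zero.mpr ha.symm
  ext j
  fin_cases j <;> simp [A2, vecMul, dotProduct, Fin.sum_univ_two] <;> field_simp <;> ring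

theorem fromBlocks_A2_sq_eq_one_general (m : ℕ) (a b : ℂ) (ha : a ≠ 1) (hb : b ≠ 0)
    (c : Fin m → ℂ) :
    (Matrix.fromBlocks (1 : Matrix (Fin m) (Fin m) ℂ)
        (Matrix.of fun i => ![c i, -b * c i / (1 - a)])
        (0 : Matrix (Fin 2) (Fin m) ℂ) (A2 a b)) ^ 2 = 1 := by
  have hQ : (Matrix.of fun i => ![c i, -b * c i / (1 - a)]) = vecMulVec c ![1, -b / (1 - a)] := by
    ext i j
    fin_cases j
    · simp [vecMulVec_apply]
    · simp [vecMulVec_apply]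
      ring
  refine fromBlocks_one_zero_sq_eq_one _ _ (A2_mul_self a hb) ?_
  rw [hQ, vecMulVec_mul, vecMul_A2_eq_neg ha hb, vecMulVec_neg]

theorem fromBlocks_A2_sq_eq_one (m : ℕ) (hm : 1 ≤ m) (a b : ℂ) (ha : a ≠ 1) (hb : b ≠ 0)
    (c : Fin m → ℂ) :
    (Matrix.fromBlocks (1 : Matrix (Fin m) (Fin m) ℂ)
        (Matrix.of fun i => ![c i, -b * c i / (1 - a)])
        (0 : Matrix (Fin 2) (Fin m) ℂ) (A2 a b)) ^ 2 = 1 :=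
  fromBlocks_A2_sq_eq_one_general m a b ha hb c
end

section
/- With X₁, X₂ and ε₀ as in the context, define 𝔛ₖ = (X₁X₂)ᵏ + (X₂X₁)ᵏ for k ∈ ℕ. Then 𝔛₁ = ε₀·I₂, 𝔛₂ = (ε₀² − 2)·I₂, and for every n ≥ 3 one has the recurrence 𝔛ₙ = ε₀·𝔛_{n−1} − 𝔛_{n−2}. -/
/-!
Each `Xᵢ` squares to `I₂` (it is traceless of determinant `-1`), so `A = X₁X₂` and `B = X₂X₁` are
mutually inverse, and a direct computation gives `A + B = ε₀ • I₂`. Hence `A` and `B` both satisfy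
`z² = ε₀ z - 1`, and the power sums `Aᵏ + Bᵏ` obey the Lucas-type recurrence.
-/

/-- The matrix `X = [[t, s], [(1−t²)/s, −t]]`. -/
noncomputable def Xmat (t s : ℂ) : Matrix (Fin 2) (Fin 2) ℂ :=
  !![t, s; (1 - t ^ 2) / s, -t]

/-- The scalar `ε₀ = 2t₁t₂ + s₁(1−t₂²)/s₂ + s₂(1−t₁²)/s₁`. -/
noncomputable def eps (t₁ s₁ t₂ s₂ : ℂ) : ℂ :=
  2 * t₁ * t₂ + s₁ * (1 - t₂ ^ 2) / s₂ + s₂ * (1 - t₁ ^ 2) / s₁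

theorem mul_mul_mul_rev_eq_one_of_mul_self_eq_one {M : Type*} [Monoid M] {x y : M}
    (hx : x * x = 1) (hy : y * y = 1) : x * y * (y * x) = 1 := by
  rw [mul_assoc, ← mul_assoc y, hy, one_mul, hx]

section PowerSums

variable {K R : Type*} [CommRing K] [Ring R] [Algebra K R] {a b : R} {c : K}

theorem sq_eq_smul_sub_one_of_add_eq_smul_one (hba : b * a = 1) (hab : a + b = c • 1) :
    a ^ 2 = c • a - 1 := by
  have h : (a + b) * a = c • a := by rw [hab, smul_one_mul]
  rw [add_mul, hba, ← sq] at h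
  exact eq_sub_of_add_eq h

theorem pow_add_two_eq_smul_sub_of_add_eq_smul_one (hba : b * a = 1) (hab : a + b = c • 1)
    (n : ℕ) : a ^ (n + 2) = c • a ^ (n + 1) - a ^ n := by
  rw [pow_add, sq_eq_smul_sub_one_of_add_eq_smul_one hba hab, mul_sub, mul_smul_comm, mul_one,
    ← pow_succ]

theorem pow_add_pow_add_two_eq (hab₁ : a * b = 1) (hba₁ : b * a = 1) (hab : a + b = c • 1)
    (n : ℕ) :
    a ^ (n + 2) + b ^ (n + 2) = c • (a ^ (n + 1) + b ^ (n + 1)) - (a ^ n + b ^ n) := by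
  rw [pow_add_two_eq_smul_sub_of_add_eq_smul_one hba₁ hab,
    pow_add_two_eq_smul_sub_of_add_eq_smul_one hab₁ ((add_comm b a).trans hab)]
  module

theorem sq_add_sq_eq_of_add_eq_smul_one (hab₁ : a * b = 1) (hba₁ : b * a = 1)
    (hab : a + b = c • 1) : a ^ 2 + b ^ 2 = (c ^ 2 - 2) • (1 : R) := by
  rw [pow_add_pow_add_two_eq hab₁ hba₁ hab 0, pow_one, pow_one, pow_zero, pow_zero, hab,
    smul_smul, ← sq, sub_smul, two_smul]

end PowerSums

theorem Xmat_mul_self (t : ℂ) {s : ℂ} (hs : s ≠ 0) : Xmat t s * Xmat t s = 1 := by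
  rw [Xmat, Matrix.mul_fin_two, Matrix.one_fin_two]
  ext i j
  fin_cases i <;> fin_cases j <;> simp <;> field_simp <;> ring

theorem Xmat_mul_add_mul_comm (t₁ t₂ : ℂ) {s₁ s₂ : ℂ} (hs₁ : s₁ ≠ 0) (hs₂ : s₂ ≠ 0) :
    Xmat t₁ s₁ * Xmat t₂ s₂ + Xmat t₂ s₂ * Xmat t₁ s₁ = eps t₁ s₁ t₂ s₂ • 1 := by
  rw [Xmat, Xmat, Matrix.mul_fin_two, Matrix.mul_fin_two, Matrix.one_fin_two, Matrix.smul_of]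
  ext i j
  fin_cases i <;> fin_cases j <;> simp [eps] <;> field_simp <;> ring

theorem frakX_recurrence (t₁ s₁ t₂ s₂ : ℂ) (hs₁ : s₁ ≠ 0) (hs₂ : s₂ ≠ 0)
    (𝔛 : ℕ → Matrix (Fin 2) (Fin 2) ℂ)
    (h𝔛 : ∀ k, 𝔛 k = (Xmat t₁ s₁ * Xmat t₂ s₂) ^ k + (Xmat t₂ s₂ * Xmat t₁ s₁) ^ k) :
    𝔛 1 = eps t₁ s₁ t₂ s₂ • (1 : Matrix (Fin 2) (Fin 2) ℂ) ∧
    𝔛 2 = (eps t₁ s₁ t₂ s₂ ^ 2 - 2) • (1 : Matrix (Fin 2) (Fin 2) ℂ) ∧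
    ∀ n, 3 ≤ n → 𝔛 n = eps t₁ s₁ t₂ s₂ • 𝔛 (n - 1) - 𝔛 (n - 2) := by
  have hX₁ := Xmat_mul_self t₁ hs₁
  have hX₂ := Xmat_mul_self t₂ hs₂
  have hab := mul_mul_mul_rev_eq_one_of_mul_self_eq_one hX₁ hX₂
  have hba := mul_mul_mul_rev_eq_one_of_mul_self_eq_one hX₂ hX₁
  have hsum := Xmat_mul_add_mul_comm t₁ t₂ hs₁ hs₂
  refine ⟨?_, ?_, fun n hn => ?_⟩
  · rw [h𝔛, pow_one, pow_one, hsum]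
  · rw [h𝔛, sq_add_sq_eq_of_add_eq_smul_one hab hba hsum]
  · obtain ⟨m, rfl⟩ := Nat.exists_eq_add_of_le' hn
    simpa [h𝔛] using pow_add_pow_add_two_eq hab hba hsum (m + 1)
end

section
/- With X₁, X₂ and ε₀ as in the context, for every n ≥ 1 the matrix (X₁X₂)ⁿ is invertible with inverse ((X₁X₂)ⁿ)⁻¹ = fₙ(ε₀)·I₂ − (X₁X₂)ⁿ, and likewise ((X₂X₁)ⁿ)⁻¹ = fₙ(ε₀)·I₂ − (X₂X₁)ⁿ, where fₙ(z) = Σ_{k=0}^{⌊n/2⌋} (−1)ᵏ · (n/(n−k)) · C(n−k, k) · z^{n−2k}. -/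
/-- The polynomial `fₙ(z) = Σ_{k=0}^{⌊n/2⌋} (−1)ᵏ (n/(n−k)) C(n−k, k) z^{n−2k}`. -/
noncomputable def f (n : ℕ) (z : ℂ) : ℂ :=
  ∑ k ∈ Finset.range (n / 2 + 1),
    (-1 : ℂ) ^ k * ((n : ℂ) / ((n - k : ℕ) : ℂ)) * ((n - k).choose k : ℂ) * z ^ (n - 2 * k)

open Polynomial Polynomial.Chebyshev Finset

section VietaFibonacci

variable (R : Type*) [CommRing R]

noncomputable def chebyshevSTerm (n k : ℕ) : R[X] :=
  (-1) ^ k * ((n - k).choose k : R[X]) * X ^ (n - 2 * k)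

lemma chebyshevSTerm_succ_zero (n : ℕ) :
    chebyshevSTerm R (n + 1) 0 = X * chebyshevSTerm R n 0 := by
  simp [chebyshevSTerm, pow_succ']

lemma chebyshevSTerm_add_two_succ (n k : ℕ) :
    chebyshevSTerm R (n + 2) (k + 1) =
      X * chebyshevSTerm R (n + 1) (k + 1) - chebyshevSTerm R n k := by
  simp only [chebyshevSTerm]
  rcases le_or_gt k n with hkn | hnk
  · have hsub : n + 2 - (k + 1) = n - k + 1 := by omega
    have hexp : n + 2 - 2 * (k + 1) = n - 2 * k := by omega
    have hsub' : n + 1 - (k + 1) = n - k := by omega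
    -- `C(n-k, k+1)` vanishes unless the exponents `n - 2k` and `n - 1 - 2k + 1` agree
    have hshift : ((n - k).choose (k + 1) : R[X]) * X ^ (n - 2 * k) =
        ((n - k).choose (k + 1) : R[X]) * (X * X ^ (n + 1 - 2 * (k + 1))) := by
      rcases le_or_gt (2 * k + 1) n with h | h
      · rw [← pow_succ', show n + 1 - 2 * (k + 1) + 1 = n - 2 * k by omega]
      · rw [Nat.choose_eq_zero_of_lt (by omega)]
        simp
    rw [hsub, hexp, hsub', Nat.choose_succ_succ']
    push_cast
    linear_combination (-1 : R[X]) ^ (k + 1) * hshift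
  · have hsub : n + 2 - (k + 1) = 0 := by omega
    have hsub' : n + 1 - (k + 1) = 0 := by omega
    have hsub'' : n - k = 0 := by omega
    simp [hsub, hsub', hsub'', Nat.choose_eq_zero_of_lt, Nat.pos_of_ne_zero (by omega : k ≠ 0)]

theorem chebyshev_S_eq_sum_chebyshevSTerm (n N : ℕ) (hN : n < 2 * N) :
    S R n = ∑ k ∈ range N, chebyshevSTerm R n k := by
  induction n using Nat.twoStepInduction generalizing N with
  | zero =>
    obtain ⟨N, rfl⟩ := Nat.exists_eq_add_one_of_ne_zero (by omega : N ≠ 0)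
    simp [sum_range_succ', chebyshevSTerm]
  | one =>
    obtain ⟨N, rfl⟩ := Nat.exists_eq_add_one_of_ne_zero (by omega : N ≠ 0)
    simp [sum_range_succ', chebyshevSTerm]
  | more n ih₀ ih₁ =>
    obtain ⟨N, rfl⟩ := Nat.exists_eq_add_one_of_ne_zero (by omega : N ≠ 0)
    have h₁ := ih₁ (N + 1) (by omega)
    push_cast at h₁ ⊢
    rw [S_add_two, h₁, ih₀ N (by omega), sum_range_succ' _ N, sum_range_succ' _ N]
    simp only [chebyshevSTerm_add_two_succ, chebyshevSTerm_succ_zero, sum_sub_distrib, ← mul_sum]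
    ring

theorem chebyshev_C_eq_S_sub_S (n : ℤ) : C R n = S R n - S R (n - 2) := by
  linear_combination C_eq_S_sub_X_mul_S R n + S_eq R n

end VietaFibonacci

theorem Nat.add_add_two_mul_choose_succ_succ (j k : ℕ) :
    (j + k + 2) * (j + 1).choose (k + 1) = (j + 1) * ((j + 1).choose (k + 1) + j.choose k) := by
  rw [mul_add, Nat.add_one_mul_choose_eq]
  ring

lemma f_summand_succ (m k : ℕ) (hk : k ≤ m) (z : ℂ) :
    (-1 : ℂ) ^ (k + 1) * (((m + 2 : ℕ) : ℂ) / ((m + 2 - (k + 1) : ℕ) : ℂ)) *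
        ((m + 2 - (k + 1)).choose (k + 1) : ℂ) * z ^ (m + 2 - 2 * (k + 1)) =
      (chebyshevSTerm ℂ (m + 2) (k + 1)).eval z - (chebyshevSTerm ℂ m k).eval z := by
  obtain ⟨j, rfl⟩ := Nat.exists_eq_add_of_le' hk
  have hcoeff : ((j + k + 2 : ℕ) : ℂ) / ((j + 1 : ℕ) : ℂ) * ((j + 1).choose (k + 1) : ℂ) =
      (j + 1).choose (k + 1) + j.choose k := by
    rw [div_mul_eq_mul_div, div_eq_iff (Nat.cast_ne_zero.mpr j.succ_ne_zero)]
    exact_mod_cast (Nat.add_add_two_mul_choose_succ_succ j k).trans (mul_comm _ _)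
  simp only [chebyshevSTerm, eval_mul, eval_pow, eval_neg, eval_one, eval_natCast, eval_X]
  rw [show j + k + 2 - (k + 1) = j + 1 by omega, show j + k + 2 - 2 * (k + 1) = j - k by omega,
    show j + k - k = j by omega, show j + k - 2 * k = j - k by omega]
  linear_combination (-1 : ℂ) ^ (k + 1) * z ^ (j - k) * hcoeff

theorem f_eq_eval_chebyshev_C (n : ℕ) (hn : 1 ≤ n) (z : ℂ) : f n z = (C ℂ n).eval z := by
  rcases Nat.lt_or_eq_of_le hn with hn | rfl
  · obtain ⟨m, rfl⟩ : ∃ m, n = m + 2 := ⟨n - 2, by omega⟩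
    have hC := chebyshev_C_eq_S_sub_S ℂ (m + 2)
    have hS := chebyshev_S_eq_sum_chebyshevSTerm ℂ (m + 2) ((m + 2) / 2 + 1) (by omega)
    rw [add_sub_cancel_right] at hC
    push_cast at hS ⊢
    rw [hC, hS, eval_sub, chebyshev_S_eq_sum_chebyshevSTerm ℂ m ((m + 2) / 2) (by omega),
      eval_finsetSum, eval_finsetSum, f, sum_range_succ', sum_range_succ' _ ((m + 2) / 2)]
    rw [sum_congr rfl fun k hk => f_summand_succ m k (by simp at hk; omega) z, sum_sub_distrib]
    rw [sub_add_eq_add_sub, Nat.sub_zero, div_self (Nat.cast_ne_zero.mpr (m + 1).succ_ne_zero)]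
    simp [chebyshevSTerm]
  · simp [f]

namespace Matrix

variable {R : Type*} [CommRing R] (A : Matrix (Fin 2) (Fin 2) R)

theorem adjugate_fin_two_eq_trace_smul_one_sub : A.adjugate = A.trace • 1 - A := by
  ext i j
  fin_cases i <;> fin_cases j <;> simp [adjugate_fin_two, trace_fin_two]

theorem inv_eq_trace_smul_one_sub_of_det_eq_one (h : A.det = 1) : A⁻¹ = A.trace • 1 - A := by
  rw [inv_def, h, Ring.inverse_one, one_smul, adjugate_fin_two_eq_trace_smul_one_sub]

theorem sq_fin_two_eq_trace_smul_sub_det_smul_one : A ^ 2 = A.trace • A - A.det • 1 := by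
  have h := A.mul_adjugate
  rw [adjugate_fin_two_eq_trace_smul_one_sub, mul_sub, mul_smul_comm, mul_one] at h
  rw [sq, ← h]
  abel

theorem trace_pow_of_det_eq_one (h : A.det = 1) (n : ℕ) :
    (A ^ n).trace = (C R n).eval A.trace := by
  induction n using Nat.twoStepInduction with
  | zero => simp
  | one => simp
  | more n ih₀ ih₁ =>
    have hrec : A ^ (n + 2) = A.trace • A ^ (n + 1) - A ^ n := by
      rw [pow_add, sq_fin_two_eq_trace_smul_sub_det_smul_one, h, one_smul, mul_sub, mul_one,
        mul_smul_comm, ← pow_succ]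
    push_cast at ih₁ ⊢
    rw [hrec, C_add_two, trace_sub, trace_smul, ih₀, ih₁, eval_sub, eval_mul, eval_X,
      smul_eq_mul]

end Matrix

open Matrix

lemma det_Xmat {t s : ℂ} (hs : s ≠ 0) : (Xmat t s).det = -1 := by
  rw [Xmat, det_fin_two_of]
  field_simp
  ring

lemma det_Xmat_mul_Xmat {t₁ s₁ t₂ s₂ : ℂ} (hs₁ : s₁ ≠ 0) (hs₂ : s₂ ≠ 0) :
    (Xmat t₁ s₁ * Xmat t₂ s₂).det = 1 := by
  rw [det_mul, det_Xmat hs₁, det_Xmat hs₂, neg_one_mul, neg_neg]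

lemma trace_Xmat_mul_Xmat {t₁ s₁ t₂ s₂ : ℂ} (hs₁ : s₁ ≠ 0) (hs₂ : s₂ ≠ 0) :
    (Xmat t₁ s₁ * Xmat t₂ s₂).trace = eps t₁ s₁ t₂ s₂ := by
  rw [Xmat, Xmat, mul_fin_two, trace_fin_two_of, eps]
  field_simp
  ring

lemma isUnit_pow_and_inv_pow_eq_f_smul_one_sub {A : Matrix (Fin 2) (Fin 2) ℂ} (h : A.det = 1)
    {n : ℕ} (hn : 1 ≤ n) : IsUnit (A ^ n) ∧ (A ^ n)⁻¹ = f n A.trace • 1 - A ^ n := by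
  have hpow : (A ^ n).det = 1 := by rw [det_pow, h, one_pow]
  refine ⟨(isUnit_iff_isUnit_det _).mpr (hpow ▸ isUnit_one), ?_⟩
  rw [inv_eq_trace_smul_one_sub_of_det_eq_one _ hpow, trace_pow_of_det_eq_one _ h,
    f_eq_eval_chebyshev_C n hn]

theorem pow_inv_eq_f_smul_one_sub (t₁ s₁ t₂ s₂ : ℂ) (hs₁ : s₁ ≠ 0) (hs₂ : s₂ ≠ 0) :
    ∀ n : ℕ, 1 ≤ n →
      IsUnit ((Xmat t₁ s₁ * Xmat t₂ s₂) ^ n) ∧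
      ((Xmat t₁ s₁ * Xmat t₂ s₂) ^ n)⁻¹ =
        f n (eps t₁ s₁ t₂ s₂) • (1 : Matrix (Fin 2) (Fin 2) ℂ) -
          (Xmat t₁ s₁ * Xmat t₂ s₂) ^ n ∧
      IsUnit ((Xmat t₂ s₂ * Xmat t₁ s₁) ^ n) ∧
      ((Xmat t₂ s₂ * Xmat t₁ s₁) ^ n)⁻¹ =
        f n (eps t₁ s₁ t₂ s₂) • (1 : Matrix (Fin 2) (Fin 2) ℂ) -
          (Xmat t₂ s₂ * Xmat t₁ s₁) ^ n := by
  intro n hn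
  obtain ⟨hunit₁₂, hinv₁₂⟩ :=
    isUnit_pow_and_inv_pow_eq_f_smul_one_sub (det_Xmat_mul_Xmat hs₁ hs₂) hn
  obtain ⟨hunit₂₁, hinv₂₁⟩ :=
    isUnit_pow_and_inv_pow_eq_f_smul_one_sub (det_Xmat_mul_Xmat hs₂ hs₁) hn
  rw [trace_Xmat_mul_Xmat hs₁ hs₂] at hinv₁₂
  rw [trace_mul_comm, trace_Xmat_mul_Xmat hs₁ hs₂] at hinv₂₁
  exact ⟨hunit₁₂, hinv₁₂, hunit₂₁, hinv₂₁⟩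
end

section
/- With X₁, X₂ and ε₀ as in the context, let T = X₁ + X₂ and let tr denote the trace of a 2×2 complex matrix. Then for every n ∈ ℕ one has tr(T^{2n}) = 2(ε₀ + 2)ⁿ and tr(T^{2n+1}) = 0; that is, tr(Tᵐ) = 2(ε₀+2)^{m/2} when m is even and tr(Tᵐ) = 0 when m is odd. -/
/-!
`X₁` and `X₂` are traceless, hence so is `T`, and Cayley–Hamilton for `2 × 2` matrices reduces to
`T² = -det T • 1 = (ε₀ + 2) • 1`. So `T^(2n) = (ε₀ + 2)ⁿ • 1` has trace `2 (ε₀ + 2)ⁿ`, while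
`T^(2n+1) = (ε₀ + 2)ⁿ • T` is traceless.
-/

namespace Matrix

section CommRing

variable {R : Type*} [CommRing R]

theorem sq_fin_two_eq_trace_smul_sub_det_smul (A : Matrix (Fin 2) (Fin 2) R) :
    A ^ 2 = A.trace • A - A.det • 1 := by
  ext i j
  fin_cases i <;> fin_cases j <;>
    simp only [Fin.zero_eta, Fin.mk_one, Fin.isValue, sq, mul_apply, Fin.sum_univ_two,
      trace_fin_two, det_fin_two, sub_apply, smul_apply, smul_eq_mul, one_apply_eq, one_apply_ne,
      ne_eq, zero_ne_one, one_ne_zero, not_false_eq_true, mul_one, mul_zero, sub_zero] <;> ring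

theorem sq_fin_two_eq_neg_det_smul_one_of_trace_eq_zero {A : Matrix (Fin 2) (Fin 2) R}
    (hA : A.trace = 0) : A ^ 2 = -A.det • 1 := by
  rw [sq_fin_two_eq_trace_smul_sub_det_smul, hA, zero_smul, zero_sub, neg_smul]

end CommRing

section CommSemiring

variable {R ι : Type*} [CommSemiring R] [Fintype ι] [DecidableEq ι]

theorem trace_pow_two_mul_of_sq_eq_smul_one {A : Matrix ι ι R} {c : R}
    (hA : A ^ 2 = c • 1) (n : ℕ) :
    (A ^ (2 * n)).trace = Fintype.card ι * c ^ n := by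
  rw [pow_mul, hA, smul_pow, one_pow, trace_smul, trace_one, smul_eq_mul, mul_comm]

theorem trace_pow_two_mul_add_one_of_sq_eq_smul_one {A : Matrix ι ι R} {c : R}
    (hA : A ^ 2 = c • 1) (n : ℕ) :
    (A ^ (2 * n + 1)).trace = c ^ n * A.trace := by
  rw [pow_succ, pow_mul, hA, smul_pow, one_pow, smul_mul_assoc, one_mul, trace_smul, smul_eq_mul]

end CommSemiring

end Matrix

open Matrix

theorem trace_Xmat (t s : ℂ) : (Xmat t s).trace = 0 := by
  simp [Xmat, trace_fin_two_of]

theorem neg_det_Xmat_add_Xmat {t₁ s₁ t₂ s₂ : ℂ} (hs₁ : s₁ ≠ 0) (hs₂ : s₂ ≠ 0) :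
    -(Xmat t₁ s₁ + Xmat t₂ s₂).det = eps t₁ s₁ t₂ s₂ + 2 := by
  simp only [Xmat, eps, of_add_of, add_cons, head_cons, tail_cons, empty_add_empty,
    det_fin_two_of]
  field_simp
  ring

theorem trace_radial_pow (t₁ s₁ t₂ s₂ : ℂ) (hs₁ : s₁ ≠ 0) (hs₂ : s₂ ≠ 0)
    (T : Matrix (Fin 2) (Fin 2) ℂ) (hT : T = Xmat t₁ s₁ + Xmat t₂ s₂) :
    ∀ n : ℕ,
      (T ^ (2 * n)).trace = 2 * (eps t₁ s₁ t₂ s₂ + 2) ^ n ∧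
      (T ^ (2 * n + 1)).trace = 0 := by
  have hT₀ : T.trace = 0 := by rw [hT, trace_add, trace_Xmat, trace_Xmat, add_zero]
  have hT₂ : T ^ 2 = (eps t₁ s₁ t₂ s₂ + 2) • 1 := by
    rw [sq_fin_two_eq_neg_det_smul_one_of_trace_eq_zero hT₀, hT, neg_det_Xmat_add_Xmat hs₁ hs₂]
  intro n
  constructor
  · rw [trace_pow_two_mul_of_sq_eq_smul_one hT₂, Fintype.card_fin, Nat.cast_ofNat]
  · rw [trace_pow_two_mul_add_one_of_sq_eq_smul_one hT₂, hT₀, mul_zero]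
end

section
/- Define g : ℕ × ℕ → ℚ by g(n,k) = n·(n−k−1)! / ((n−2k)!·k!) if n ≥ 1 and 0 ≤ 2k ≤ n, and g(n,k) = 0 otherwise. Then g(1,0) = 1, and for all natural numbers n ≥ 2 and k ≥ 1 one has the Lucas-triangle recurrence g(n+1, k) = g(n, k) + g(n−1, k−1). -/
/-!
Write `f(n,k) = C(n−k,k)` for the shallow diagonals of Pascal's triangle (whose row sums are the
Fibonacci numbers). For `n ≥ 1` the Lucas entries are `g(n,k) = 2 f(n,k) − f(n−1,k)`, and Pascal's
rule gives `f(n+1,k) = f(n,k) + f(n−1,k−1)`; the recurrence is linear, so it passes from `f` to `g`.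
-/

/-- The Lucas-triangle entries `g(n,k) = n(n−k−1)!/((n−2k)!k!)` for `n ≥ 1`, `2k ≤ n`,
and `0` otherwise. -/
def lucasEntry : ℕ × ℕ → ℚ := fun p =>
  if 1 ≤ p.1 ∧ 2 * p.2 ≤ p.1 then
    (p.1 : ℚ) * (Nat.factorial (p.1 - p.2 - 1)) /
      ((Nat.factorial (p.1 - 2 * p.2)) * (Nat.factorial p.2))
  else 0

def fibEntry (n k : ℕ) : ℕ := (n - k).choose k

theorem fibEntry_succ_succ (n k : ℕ) :
    fibEntry (n + 2) (k + 1) = fibEntry (n + 1) (k + 1) + fibEntry n k := by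
  simp only [fibEntry]
  rcases le_or_gt k n with h | h
  · obtain ⟨a, rfl⟩ := Nat.exists_eq_add_of_le h
    rw [show k + a + 2 - (k + 1) = a + 1 by omega, show k + a + 1 - (k + 1) = a by omega,
      Nat.add_sub_cancel_left, Nat.choose_succ_succ', add_comm]
  · rw [Nat.choose_eq_zero_of_lt (by omega : n + 2 - (k + 1) < k + 1),
      Nat.choose_eq_zero_of_lt (by omega : n + 1 - (k + 1) < k + 1),
      Nat.choose_eq_zero_of_lt (by omega : n - k < k)]

theorem Nat.cast_choose_mul_succ {R : Type*} [Ring R] (a k : ℕ) :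
    (a.choose k : R) * (a + 1) = (a + 1).choose k * (a + 1 - k) := by
  rcases le_or_gt k (a + 1) with h | h
  · have := congrArg (Nat.cast : ℕ → R) (Nat.choose_mul_succ_eq a k)
    push_cast [Nat.cast_sub h] at this
    exact this
  · rw [Nat.choose_eq_zero_of_lt h, Nat.choose_eq_zero_of_lt (by omega)]
    simp

theorem lucasEntry_eq_mul_choose_div {n k : ℕ} (hn : 1 ≤ n) (hk : 2 * k ≤ n) :
    lucasEntry (n, k) = n / (n - k : ℕ) * (n - k).choose k := by
  obtain ⟨a, ha⟩ : ∃ a, n - k = a + 1 := ⟨n - k - 1, by omega⟩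
  rw [lucasEntry, if_pos ⟨hn, hk⟩]
  dsimp only
  rw [show n - k - 1 = a by omega, show n - 2 * k = a + 1 - k by omega, ha,
    Nat.cast_choose ℚ (by omega : k ≤ a + 1), Nat.factorial_succ]
  push_cast
  field_simp

theorem lucasEntry_succ_eq_two_mul_fibEntry_sub (n k : ℕ) :
    lucasEntry (n + 1, k) = 2 * fibEntry (n + 1) k - fibEntry n k := by
  rcases le_or_gt (2 * k) (n + 1) with hk | hk
  · obtain ⟨a, ha⟩ : ∃ a, n + 1 - k = a + 1 := ⟨n - k, by omega⟩
    have hpascal := Nat.cast_choose_mul_succ (R := ℚ) a k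
    rw [lucasEntry_eq_mul_choose_div (by omega) hk, fibEntry, fibEntry, ha,
      show n - k = a by omega]
    have hn : ((n + 1 : ℕ) : ℚ) = a + 1 + k := by exact_mod_cast (by omega : n + 1 = a + 1 + k)
    push_cast at hn ⊢
    rw [hn]
    field_simp
    linear_combination hpascal
  · rw [lucasEntry, if_neg (by omega), fibEntry, fibEntry, Nat.choose_eq_zero_of_lt (by omega),
      Nat.choose_eq_zero_of_lt (by omega)]
    simp

theorem lucasEntry_recurrence :
    lucasEntry (1, 0) = 1 ∧
    ∀ n k : ℕ, 2 ≤ n → 1 ≤ k →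
      lucasEntry (n + 1, k) = lucasEntry (n, k) + lucasEntry (n - 1, k - 1) := by
  refine ⟨by norm_num [lucasEntry], fun n k hn hk => ?_⟩
  obtain ⟨m, rfl⟩ : ∃ m, n = m + 1 + 1 := ⟨n - 2, by omega⟩
  obtain ⟨j, rfl⟩ : ∃ j, k = j + 1 := ⟨k - 1, by omega⟩
  have hfib : (fibEntry (m + 3) (j + 1) : ℚ) = fibEntry (m + 2) (j + 1) + fibEntry (m + 1) j :=
    mod_cast fibEntry_succ_succ (m + 1) j
  have hfib' : (fibEntry (m + 2) (j + 1) : ℚ) = fibEntry (m + 1) (j + 1) + fibEntry m j :=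
    mod_cast fibEntry_succ_succ m j
  simp only [Nat.add_sub_cancel, lucasEntry_succ_eq_two_mul_fibEntry_sub]
  linear_combination 2 * hfib - hfib'
end
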